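/- arXiv:1408.6285 — 4 statements merged into one kernel-verified Lean document; each statement's English description precedes it below -/
import Mathlib

section
/- For jointly distributed finite random variables A and B, the Wyner tension satisfies T_Wyn(A;B) = CI_Wyn(A;B) - I(A;B), where T_Wyn(A;B) = inf over channels p_{Q|AB} with A-Q-B a Markov chain of I(A;Q|B)+I(B;Q|A), and CI_Wyn(A;B) = inf over such channels of I(A,B;Q). -/
namespace Paper

open Classical in
/-- Probability of an event under a pmf `μ` on a finite sample space. -/
noncomputable def pe {Ω : Type*} [Fintype Ω] (μ : Ω → ℝ) (E : Ω → Prop) : ℝ :=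
  ∑ ω, if E ω then μ ω else 0

/-- Probability that random variable `X` takes value `a`. -/
noncomputable def prob {Ω α : Type*} [Fintype Ω] (μ : Ω → ℝ) (X : Ω → α) (a : α) : ℝ :=
  pe μ (fun ω => X ω = a)

/-- `μ` is a probability mass function. -/
def IsPMF {Ω : Type*} [Fintype Ω] (μ : Ω → ℝ) : Prop :=
  (∀ ω, 0 ≤ μ ω) ∧ ∑ ω, μ ω = 1

open Classical in
/-- Shannon entropy (in bits) of the random variable `X` under `μ`. -/
noncomputable def H {Ω α : Type*} [Fintype Ω] (μ : Ω → ℝ) (X : Ω → α) : ℝ :=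
  -∑ a ∈ Finset.univ.image X, prob μ X a * Real.logb 2 (prob μ X a)

/-- Mutual information `I(X;Y)` in bits. -/
noncomputable def mutInfo {Ω α β : Type*} [Fintype Ω] (μ : Ω → ℝ)
    (X : Ω → α) (Y : Ω → β) : ℝ :=
  H μ X + H μ Y - H μ (fun ω => (X ω, Y ω))

/-- Conditional entropy `H(X|Y)` in bits. -/
noncomputable def condEnt {Ω α β : Type*} [Fintype Ω] (μ : Ω → ℝ)
    (X : Ω → α) (Y : Ω → β) : ℝ :=
  H μ (fun ω => (X ω, Y ω)) - H μ Y

/-- Conditional mutual information `I(X;Y|Z)` in bits. -/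
noncomputable def condMutInfo {Ω α β γ : Type*} [Fintype Ω] (μ : Ω → ℝ)
    (X : Ω → α) (Y : Ω → β) (Z : Ω → γ) : ℝ :=
  H μ (fun ω => (X ω, Z ω)) + H μ (fun ω => (Y ω, Z ω))
    - H μ (fun ω => (X ω, Y ω, Z ω)) - H μ Z

end Paper
namespace Paper

/-- Wyner tension `T_Wyn(A;B)`: infimum over channels `p_{Q|AB}` (on some finite
alphabet, wlog `Fin n`) making `A-Q-B` a Markov chain, of `I(A;Q|B)+I(B;Q|A)`. -/
noncomputable def TWyn {α β : Type} [Fintype α] [Fintype β] (μ : α × β → ℝ) : ℝ :=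
  sInf { v : ℝ | ∃ (n : ℕ) (ν : α × β × Fin n → ℝ), IsPMF ν ∧
    (∀ a b, (∑ q, ν (a, b, q)) = μ (a, b)) ∧
    condMutInfo ν (fun w => w.1) (fun w => w.2.1) (fun w => w.2.2) = 0 ∧
    v = condMutInfo ν (fun w => w.1) (fun w => w.2.2) (fun w => w.2.1)
      + condMutInfo ν (fun w => w.2.1) (fun w => w.2.2) (fun w => w.1) }

/-- Wyner's common information `CI_Wyn(A;B)`: infimum over channels `p_{Q|AB}`
with `A-Q-B` a Markov chain of `I(A,B;Q)`. -/
noncomputable def CIWyn {α β : Type} [Fintype α] [Fintype β] (μ : α × β → ℝ) : ℝ :=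
  sInf { v : ℝ | ∃ (n : ℕ) (ν : α × β × Fin n → ℝ), IsPMF ν ∧
    (∀ a b, (∑ q, ν (a, b, q)) = μ (a, b)) ∧
    condMutInfo ν (fun w => w.1) (fun w => w.2.1) (fun w => w.2.2) = 0 ∧
    v = mutInfo ν (fun w => (w.1, w.2.1)) (fun w => w.2.2) }

end Paper

namespace Paper

/-! Whenever `A - Q - B` is Markov, expanding everything into joint entropies gives
`I(A;Q|B) + I(B;Q|A) = I(A,B;Q) - I(A;B) + I(A;B|Q) = I(A,B;Q) - I(A;B)`, so the set of values
defining `T_Wyn` is the translate by `-I(A;B)` of the one defining `CI_Wyn`. Translation commutes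
with `sInf` once that set is nonempty (take `Q = (A,B)`) and bounded below (mutual information
is nonnegative, by `log x ≤ x - 1`). -/

open Finset Real

section Entropy

variable {Ω : Type*} [Fintype Ω] {μ : Ω → ℝ}

open Classical in
theorem sum_mul_comp_eq_sum_prob_mul {γ : Type*} [Fintype γ] (Z : Ω → γ) (g : γ → ℝ) :
    ∑ ω, μ ω * g (Z ω) = ∑ c, prob μ Z c * g c := by
  simp only [prob, pe, sum_mul, ite_mul, zero_mul]
  rw [sum_comm]
  simp

theorem sum_prob {α : Type*} [Fintype α] (X : Ω → α) : ∑ a, prob μ X a = ∑ ω, μ ω := by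
  simpa using (sum_mul_comp_eq_sum_prob_mul (μ := μ) X fun _ => (1 : ℝ)).symm

theorem prob_nonneg (hμ : ∀ ω, 0 ≤ μ ω) {α : Type*} (X : Ω → α) (a : α) :
    0 ≤ prob μ X a :=
  sum_nonneg fun ω _ => by split <;> simp [hμ ω]

open Classical in
theorem prob_apply_pos (hμ : ∀ ω, 0 ≤ μ ω) {α : Type*} (X : Ω → α) {ω : Ω} (hω : μ ω ≠ 0) :
    0 < prob μ X (X ω) := by
  refine ((hμ ω).lt_of_ne' hω).trans_le ?_
  simpa [prob, pe] using single_le_sum (f := fun ω' => if X ω' = X ω then μ ω' else 0)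
    (fun ω' _ => by split <;> simp [hμ ω']) (mem_univ ω)

open Classical in
theorem H_eq_neg_sum_mul_logb {α : Type*} (X : Ω → α) :
    H μ X = -∑ ω, μ ω * logb 2 (prob μ X (X ω)) := by
  unfold H
  conv_lhs => enter [1, 2, a, 1]; unfold prob pe
  simp only [sum_mul, ite_mul, zero_mul]
  rw [sum_comm]
  simp

open Classical in
theorem H_eq_of_fiber_iff {α β : Type*} {X : Ω → α} {Y : Ω → β}
    (h : ∀ ω ω', μ ω ≠ 0 → μ ω' ≠ 0 → (X ω = X ω' ↔ Y ω = Y ω')) : H μ X = H μ Y := by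
  rw [H_eq_neg_sum_mul_logb, H_eq_neg_sum_mul_logb]
  congr 1
  refine sum_congr rfl fun ω _ => ?_
  by_cases hω : μ ω = 0
  · simp [hω]
  congr 2
  unfold prob pe
  refine sum_congr rfl fun ω' _ => ?_
  by_cases hω' : μ ω' = 0
  · simp [hω']
  exact if_congr (h ω' ω hω' hω) rfl rfl

theorem H_prod_eq_of_eq_comp {α β : Type*} {X : Ω → α} {Y : Ω → β} (f : β → α)
    (h : ∀ ω, μ ω ≠ 0 → X ω = f (Y ω)) : H μ (fun ω => (X ω, Y ω)) = H μ Y :=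
  H_eq_of_fiber_iff fun ω ω' hω hω' =>
    ⟨congrArg Prod.snd, fun e => by rw [h ω hω, h ω' hω', e]⟩

theorem condMutInfo_add_condMutInfo {α β γ : Type*} (X : Ω → α) (Y : Ω → β) (Z : Ω → γ) :
    condMutInfo μ X Z Y + condMutInfo μ Y Z X
      = mutInfo μ (fun ω => (X ω, Y ω)) Z - mutInfo μ X Y + condMutInfo μ X Y Z := by
  have hZY : H μ (fun ω => (Z ω, Y ω)) = H μ (fun ω => (Y ω, Z ω)) :=
    H_eq_of_fiber_iff fun _ _ _ _ => by simp only [Prod.mk.injEq]; tauto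
  have hZX : H μ (fun ω => (Z ω, X ω)) = H μ (fun ω => (X ω, Z ω)) :=
    H_eq_of_fiber_iff fun _ _ _ _ => by simp only [Prod.mk.injEq]; tauto
  have hYX : H μ (fun ω => (Y ω, X ω)) = H μ (fun ω => (X ω, Y ω)) :=
    H_eq_of_fiber_iff fun _ _ _ _ => by simp only [Prod.mk.injEq]; tauto
  have hXZY : H μ (fun ω => (X ω, Z ω, Y ω)) = H μ (fun ω => (X ω, Y ω, Z ω)) :=
    H_eq_of_fiber_iff fun _ _ _ _ => by simp only [Prod.mk.injEq]; tauto
  have hYZX : H μ (fun ω => (Y ω, Z ω, X ω)) = H μ (fun ω => (X ω, Y ω, Z ω)) :=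
    H_eq_of_fiber_iff fun _ _ _ _ => by simp only [Prod.mk.injEq]; tauto
  have hXYZ : H μ (fun ω => ((X ω, Y ω), Z ω)) = H μ (fun ω => (X ω, Y ω, Z ω)) :=
    H_eq_of_fiber_iff fun _ _ _ _ => by simp only [Prod.mk.injEq]; tauto
  simp only [condMutInfo, mutInfo, hZY, hZX, hYX, hXZY, hYZX, hXYZ]
  ring

theorem log_add_log_sub_log_le {a b c : ℝ} (ha : 0 < a) (hb : 0 < b) (hc : 0 < c) :
    log a + log b - log c ≤ a * b / c - 1 := by
  rw [← log_mul ha.ne' hb.ne', ← log_div (by positivity) hc.ne']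
  exact log_le_sub_one_of_pos (by positivity)

theorem mutInfo_eq_neg_sum_div {α β : Type*} (X : Ω → α) (Y : Ω → β) :
    mutInfo μ X Y = -(∑ ω, μ ω * (log (prob μ X (X ω)) + log (prob μ Y (Y ω))
      - log (prob μ (fun ω => (X ω, Y ω)) (X ω, Y ω)))) / log 2 := by
  simp only [mutInfo, H_eq_neg_sum_mul_logb, logb, ← mul_div_assoc, ← sum_div, mul_add, mul_sub,
    sum_add_distrib, sum_sub_distrib]
  ring

theorem mutInfo_nonneg {α β : Type*} [Fintype α] [Fintype β] (hμ : IsPMF μ)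
    (X : Ω → α) (Y : Ω → β) : 0 ≤ mutInfo μ X Y := by
  rw [mutInfo_eq_neg_sum_div]
  refine div_nonneg (neg_nonneg.2 ?_) (log_pos one_lt_two).le
  calc _ ≤ ∑ ω, μ ω * (prob μ X (X ω) * prob μ Y (Y ω) / prob μ (fun ω => (X ω, Y ω)) (X ω, Y ω)
          - 1) := by
        refine sum_le_sum fun ω _ => ?_
        by_cases hω : μ ω = 0
        · simp [hω]
        exact mul_le_mul_of_nonneg_left (log_add_log_sub_log_le (prob_apply_pos hμ.1 X hω)
          (prob_apply_pos hμ.1 Y hω) (prob_apply_pos hμ.1 (fun ω => (X ω, Y ω)) hω)) (hμ.1 ω)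
    _ = ∑ c, prob μ (fun ω => (X ω, Y ω)) c
          * (prob μ X c.1 * prob μ Y c.2 / prob μ (fun ω => (X ω, Y ω)) c) - ∑ ω, μ ω := by
        simp only [mul_sub, mul_one, sum_sub_distrib]
        rw [sum_mul_comp_eq_sum_prob_mul (fun ω => (X ω, Y ω))
          fun c => prob μ X c.1 * prob μ Y c.2 / prob μ (fun ω => (X ω, Y ω)) c]
    _ ≤ ∑ c : α × β, prob μ X c.1 * prob μ Y c.2 - ∑ ω, μ ω := by
        refine sub_le_sub_right (sum_le_sum fun c _ => ?_) _
        by_cases hc : prob μ (fun ω => (X ω, Y ω)) c = 0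
        · simpa [hc] using mul_nonneg (prob_nonneg hμ.1 X c.1) (prob_nonneg hμ.1 Y c.2)
        rw [mul_div_cancel₀ _ hc]
    _ = 0 := by
        rw [Fintype.sum_prod_type, ← Fintype.sum_mul_sum, sum_prob, sum_prob, hμ.2]
        norm_num

end Entropy

section Marginal

variable {α β γ : Type*} [Fintype α] [Fintype β] [Fintype γ] {μ : α × β → ℝ}
  {ν : α × β × γ → ℝ}

theorem sum_mul_comp_of_marginal (hm : ∀ a b, ∑ q, ν (a, b, q) = μ (a, b)) (φ : α × β → ℝ) :
    ∑ w, ν w * φ (w.1, w.2.1) = ∑ x, μ x * φ x := by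
  simp only [Fintype.sum_prod_type, ← hm, sum_mul]

open Classical in
theorem prob_comp_of_marginal (hm : ∀ a b, ∑ q, ν (a, b, q) = μ (a, b)) {δ : Type*}
    (X : α × β → δ) (d : δ) : prob ν (fun w => X (w.1, w.2.1)) d = prob μ X d := by
  simpa only [prob, pe, mul_boole] using
    sum_mul_comp_of_marginal hm fun x => if X x = d then 1 else 0

theorem H_comp_of_marginal (hm : ∀ a b, ∑ q, ν (a, b, q) = μ (a, b)) {δ : Type*}
    (X : α × β → δ) : H ν (fun w => X (w.1, w.2.1)) = H μ X := by
  rw [H_eq_neg_sum_mul_logb, H_eq_neg_sum_mul_logb]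
  simp only [prob_comp_of_marginal hm]
  rw [sum_mul_comp_of_marginal hm fun x => logb 2 (prob μ X (X x))]

theorem mutInfo_of_marginal (hm : ∀ a b, ∑ q, ν (a, b, q) = μ (a, b)) :
    mutInfo ν (fun w => w.1) (fun w => w.2.1) = mutInfo μ Prod.fst Prod.snd := by
  simp only [mutInfo, ← H_comp_of_marginal hm]

theorem tension_eq_of_markov (hm : ∀ a b, ∑ q, ν (a, b, q) = μ (a, b))
    (hM : condMutInfo ν (fun w => w.1) (fun w => w.2.1) (fun w => w.2.2) = 0) :
    condMutInfo ν (fun w => w.1) (fun w => w.2.2) (fun w => w.2.1)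
        + condMutInfo ν (fun w => w.2.1) (fun w => w.2.2) (fun w => w.1)
      = mutInfo ν (fun w => (w.1, w.2.1)) (fun w => w.2.2) - mutInfo μ Prod.fst Prod.snd := by
  rw [condMutInfo_add_condMutInfo, hM, mutInfo_of_marginal hm, add_zero]

end Marginal

theorem exists_markov_channel {α β : Type} [Fintype α] [Fintype β] {μ : α × β → ℝ}
    (hμ : IsPMF μ) :
    ∃ (n : ℕ) (ν : α × β × Fin n → ℝ), IsPMF ν ∧ (∀ a b, ∑ q, ν (a, b, q) = μ (a, b)) ∧
      condMutInfo ν (fun w => w.1) (fun w => w.2.1) (fun w => w.2.2) = 0 := by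
  classical
  let e := Fintype.equivFin (α × β)
  let ν : α × β × Fin _ → ℝ := fun w => if w.2.2 = e (w.1, w.2.1) then μ (w.1, w.2.1) else 0
  have hm : ∀ a b, ∑ q, ν (a, b, q) = μ (a, b) := fun a b => by simp [ν]
  have hQ : ∀ w, ν w ≠ 0 → (w.1, w.2.1) = e.symm w.2.2 := fun w hw => by
    have : w.2.2 = e (w.1, w.2.1) := by_contra fun h => hw (if_neg h)
    rw [this, Equiv.symm_apply_apply]
  have hAQ : H ν (fun w => (w.1, w.2.2)) = H ν (fun w => w.2.2) :=
    H_prod_eq_of_eq_comp (fun q => (e.symm q).1) fun w hw => by rw [← hQ w hw]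
  have hBQ : H ν (fun w => (w.2.1, w.2.2)) = H ν (fun w => w.2.2) :=
    H_prod_eq_of_eq_comp (fun q => (e.symm q).2) fun w hw => by rw [← hQ w hw]
  have hABQ : H ν (fun w => (w.1, w.2.1, w.2.2)) = H ν (fun w => (w.2.1, w.2.2)) :=
    H_prod_eq_of_eq_comp (fun bq => (e.symm bq.2).1) fun w hw => by rw [← hQ w hw]
  refine ⟨_, ν, ⟨fun w => ?_, ?_⟩, hm, ?_⟩
  · dsimp only [ν]
    split
    exacts [hμ.1 _, le_rfl]
  · simpa [hμ.2] using sum_mul_comp_of_marginal hm fun _ => 1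
  · rw [condMutInfo, hABQ, hAQ, hBQ]
    ring

/-- `T_Wyn(A;B) = CI_Wyn(A;B) - I(A;B)`. -/
theorem twyn_eq_ciwyn_sub_mutInfo {α β : Type} [Fintype α] [Fintype β]
    (μ : α × β → ℝ) (hμ : IsPMF μ) :
    TWyn μ = CIWyn μ - mutInfo μ Prod.fst Prod.snd := by
  obtain ⟨n, ν, hν, hm, hM⟩ := exists_markov_channel hμ
  rw [TWyn, CIWyn, ← OrderIso.subRight_apply, OrderIso.map_csInf' _ ?nonempty ?bddBelow]
  case nonempty => exact ⟨_, n, ν, hν, hm, hM, rfl⟩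
  case bddBelow =>
    refine ⟨0, ?_⟩
    rintro _ ⟨n, ν, hν, -, -, rfl⟩
    exact mutInfo_nonneg hν _ _
  congr 1
  ext v
  constructor
  · rintro ⟨n, ν, hν, hm, hM, rfl⟩
    exact ⟨_, ⟨n, ν, hν, hm, hM, rfl⟩, by rw [OrderIso.subRight_apply, tension_eq_of_markov hm hM]⟩
  · rintro ⟨_, ⟨n, ν, hν, hm, hM, rfl⟩, rfl⟩
    exact ⟨n, ν, hν, hm, hM, (tension_eq_of_markov hm hM).symm⟩

end Paper
end

section
/- Let S, T be jointly distributed random variables over finite sets 𝒮 × 𝒯, let T₀ ⊆ 𝒯 be such that for all t ∈ T₀, Pr[S ∈ 𝒮_t] ≤ δ, where 𝒮_t = {s ∈ 𝒮 : Pr[S=s | T=t] > 0}, and suppose Pr[T ∈ T₀] ≥ ε. Then I(S;T) ≥ ε·log(1/δ). -/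
/-!
Write `p(t) = Pr[T = t]`. Mutual information is `∑ₜ p(t) · D(p_{S|T=t} ‖ p_S)`, and applying the
log-sum inequality to the `t`-th divergence over the support `𝒮_t` alone (where `p_{S|T=t}` has
total mass one and `p_S` has mass `Pr[S ∈ 𝒮_t]`) gives `D(p_{S|T=t} ‖ p_S) ≥ log (1 / Pr[S ∈ 𝒮_t])`.
This is at least `log (1 / δ)` for `t ∈ T₀` and nonnegative for every `t`, so weighting by `p(t)`
gives `I(S;T) ≥ Pr[T ∈ T₀] · log (1 / δ) ≥ ε · log (1 / δ)`.
-/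

namespace Paper

open Real Finset

-- The log-sum inequality, from Jensen's inequality for `x ↦ x log x` with weights `b i / ∑ b`.
theorem mul_log_div_le_sum_mul_log_div {ι : Type*} (s : Finset ι) {a b : ι → ℝ}
    (ha : ∀ i ∈ s, 0 ≤ a i) (hb : ∀ i ∈ s, 0 ≤ b i) (hab : ∀ i ∈ s, b i = 0 → a i = 0) :
    (∑ i ∈ s, a i) * log ((∑ i ∈ s, a i) / ∑ i ∈ s, b i) ≤ ∑ i ∈ s, a i * log (a i / b i) := by
  set A := ∑ i ∈ s, a i
  set B := ∑ i ∈ s, b i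
  have weighted (i : ι) (hi : i ∈ s) (x : ℝ) : b i / B * (a i / b i * x) = a i * x / B := by
    by_cases hbi : b i = 0
    · simp [hbi, hab i hi hbi]
    · field_simp
  rcases (sum_nonneg hb : 0 ≤ B).eq_or_lt with hB | hB
  · have hb0 := (sum_eq_zero_iff_of_nonneg hb).1 hB.symm
    rw [show B = 0 from hB.symm, div_zero, log_zero, mul_zero]
    exact sum_nonneg fun i hi => by simp [hab i hi (hb0 i hi)]
  have jensen := convexOn_mul_log.map_sum_le (t := s) (w := fun i => b i / B)
    (p := fun i => a i / b i) (fun i hi => div_nonneg (hb i hi) hB.le)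
    (by rw [← sum_div, div_self hB.ne'])
    (fun i hi => Set.mem_Ici.2 (div_nonneg (ha i hi) (hb i hi)))
  simp only [smul_eq_mul] at jensen
  have hmean : ∑ i ∈ s, b i / B * (a i / b i) = A / B := by
    rw [sum_div]
    exact sum_congr rfl fun i hi => by simpa using weighted i hi 1
  rw [hmean, sum_congr rfl fun i hi => weighted i hi _, ← sum_div] at jensen
  exact (div_le_div_iff_of_pos_right hB).1 (by simpa [div_mul_eq_mul_div] using jensen)

section Probability

variable {Ω α β : Type*} [Fintype Ω]

theorem pe_nonneg {μ : Ω → ℝ} (hμ : ∀ ω, 0 ≤ μ ω) (E : Ω → Prop) : 0 ≤ pe μ E :=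
  sum_nonneg fun ω _ => by split_ifs <;> simp [hμ ω]

theorem pe_le_one {μ : Ω → ℝ} (hμ : IsPMF μ) (E : Ω → Prop) : pe μ E ≤ 1 :=
  hμ.2 ▸ sum_le_sum fun ω _ => by split_ifs <;> simp [hμ.1 ω]

theorem pe_mem_eq_sum_prob (μ : Ω → ℝ) (X : Ω → α) (A : Finset α) :
    pe μ (fun ω => X ω ∈ A) = ∑ a ∈ A, prob μ X a := by
  classical
  simp only [prob, pe]
  rw [sum_comm]
  exact sum_congr rfl fun ω _ => by simp

theorem H_eq_sum [Fintype α] (μ : Ω → ℝ) (X : Ω → α) :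
    H μ X = -∑ a, prob μ X a * logb 2 (prob μ X a) := by
  classical
  have hprob (a : α) (ha : a ∉ univ.image X) : prob μ X a = 0 :=
    sum_eq_zero fun ω _ => if_neg fun h => ha (mem_image.2 ⟨ω, mem_univ ω, h⟩)
  rw [H, sum_subset (subset_univ _) fun a _ ha => by simp [hprob a ha]]

theorem prob_pair [Fintype α] [Fintype β] (μ : α × β → ℝ) (p : α × β) :
    prob μ (fun ω => (ω.1, ω.2)) p = μ p := by
  classical
  simp [prob, pe]

theorem prob_fst [Fintype α] [Fintype β] (μ : α × β → ℝ) (a : α) :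
    prob μ Prod.fst a = ∑ b, μ (a, b) := by
  rw [prob, pe, Fintype.sum_prod_type, Fintype.sum_eq_single a fun x hx => by simp [hx]]
  simp

theorem prob_snd [Fintype α] [Fintype β] (μ : α × β → ℝ) (b : β) :
    prob μ Prod.snd b = ∑ a, μ (a, b) := by
  rw [prob, pe, Fintype.sum_prod_type_right, Fintype.sum_eq_single b fun x hx => by simp [hx]]
  simp

theorem le_prob_fst [Fintype α] [Fintype β] {μ : α × β → ℝ} (hμ : ∀ p, 0 ≤ μ p) (a : α) (b : β) :
    μ (a, b) ≤ prob μ Prod.fst a :=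
  prob_fst μ a ▸ single_le_sum (fun b _ => hμ (a, b)) (mem_univ b)

theorem le_prob_snd [Fintype α] [Fintype β] {μ : α × β → ℝ} (hμ : ∀ p, 0 ≤ μ p) (a : α) (b : β) :
    μ (a, b) ≤ prob μ Prod.snd b :=
  prob_snd μ b ▸ single_le_sum (fun a _ => hμ (a, b)) (mem_univ a)

end Probability

section Support

variable {α β : Type*} [Fintype α] {μ : α × β → ℝ}

-- The support `𝒮_b` of the conditional distribution of the first coordinate given `b`.
open Classical in
noncomputable def condSupport (μ : α × β → ℝ) (b : β) : Finset α :=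
  univ.filter fun a => 0 < μ (a, b)

theorem sum_condSupport_eq (hμ : ∀ p, 0 ≤ μ p) (b : β) {f : α → ℝ}
    (hf : ∀ a, μ (a, b) = 0 → f a = 0) : ∑ a ∈ condSupport μ b, f a = ∑ a, f a :=
  sum_subset (subset_univ _) fun a _ ha =>
    hf a (le_antisymm (not_lt.1 fun h => ha (by simp [condSupport, h])) (hμ (a, b)))

end Support

section MutualInformation

variable {α β : Type*} [Fintype α] [Fintype β] {μ : α × β → ℝ}

theorem mutInfo_fst_snd_eq_sum (hμ : ∀ p, 0 ≤ μ p) :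
    mutInfo μ Prod.fst Prod.snd = ∑ b, ∑ a,
      μ (a, b) * logb 2 (μ (a, b) / (prob μ Prod.fst a * prob μ Prod.snd b)) := by
  have hS : ∑ a, prob μ Prod.fst a * logb 2 (prob μ Prod.fst a)
      = ∑ b, ∑ a, μ (a, b) * logb 2 (prob μ Prod.fst a) := by
    rw [sum_comm]
    exact sum_congr rfl fun a _ => by rw [← sum_mul, ← prob_fst]
  have hT : ∑ b, prob μ Prod.snd b * logb 2 (prob μ Prod.snd b)
      = ∑ b, ∑ a, μ (a, b) * logb 2 (prob μ Prod.snd b) :=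
    sum_congr rfl fun b _ => by rw [← sum_mul, ← prob_snd]
  have hST : ∑ p, prob μ (fun ω => (ω.1, ω.2)) p * logb 2 (prob μ (fun ω => (ω.1, ω.2)) p)
      = ∑ b, ∑ a, μ (a, b) * logb 2 (μ (a, b)) := by
    simp only [prob_pair, Fintype.sum_prod_type_right]
  have hterm (a : α) (b : β) :
      μ (a, b) * logb 2 (μ (a, b) / (prob μ Prod.fst a * prob μ Prod.snd b)) =
        μ (a, b) * logb 2 (μ (a, b)) - μ (a, b) * logb 2 (prob μ Prod.fst a)
          - μ (a, b) * logb 2 (prob μ Prod.snd b) := by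
    rcases (hμ (a, b)).eq_or_lt with h | h
    · simp [← h]
    · rw [logb_div h.ne' (mul_pos (h.trans_le (le_prob_fst hμ a b))
        (h.trans_le (le_prob_snd hμ a b))).ne', logb_mul (h.trans_le (le_prob_fst hμ a b)).ne'
        (h.trans_le (le_prob_snd hμ a b)).ne']
      ring
  rw [mutInfo, H_eq_sum, H_eq_sum, H_eq_sum, hS, hT, hST]
  simp only [hterm, sum_sub_distrib]
  ring

theorem pe_condSupport (μ : α × β → ℝ) (b : β) :
    pe μ (fun p => 0 < μ (p.1, b)) = ∑ a ∈ condSupport μ b, prob μ Prod.fst a := by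
  rw [← pe_mem_eq_sum_prob]
  simp [condSupport]

theorem prob_snd_le_pe_condSupport (hμ : ∀ p, 0 ≤ μ p) (b : β) :
    prob μ Prod.snd b ≤ pe μ (fun p => 0 < μ (p.1, b)) := by
  rw [pe_condSupport, prob_snd, ← sum_condSupport_eq hμ b fun _ h => h]
  exact sum_le_sum fun a _ => le_prob_fst hμ a b

theorem prob_snd_mul_logb_le_of_pe_condSupport_le (hμ : ∀ p, 0 ≤ μ p) {b : β} {δ : ℝ}
    (hδ : pe μ (fun p => 0 < μ (p.1, b)) ≤ δ) :
    prob μ Prod.snd b * logb 2 (1 / δ) ≤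
      prob μ Prod.snd b * logb 2 (1 / pe μ (fun p => 0 < μ (p.1, b))) := by
  have hpT : 0 ≤ prob μ Prod.snd b := pe_nonneg hμ _
  rcases hpT.eq_or_lt with h | h
  · simp [← h]
  have hsupp := h.trans_le (prob_snd_le_pe_condSupport hμ b)
  exact mul_le_mul_of_nonneg_left (logb_le_logb_of_le one_lt_two
    (one_div_pos.2 (hsupp.trans_le hδ)) (one_div_le_one_div_of_le hsupp hδ)) hpT

theorem prob_snd_mul_logb_pe_condSupport_nonneg (hμ : IsPMF μ) (b : β) :
    0 ≤ prob μ Prod.snd b * logb 2 (1 / pe μ (fun p => 0 < μ (p.1, b))) := by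
  rw [one_div, logb_inv]
  exact mul_nonneg (pe_nonneg hμ.1 _)
    (neg_nonneg.2 (logb_nonpos one_lt_two (pe_nonneg hμ.1 _) (pe_le_one hμ _)))

theorem prob_snd_mul_logb_le_sum (hμ : ∀ p, 0 ≤ μ p) (b : β) :
    prob μ Prod.snd b * logb 2 (1 / pe μ (fun p => 0 < μ (p.1, b))) ≤
      ∑ a, μ (a, b) * logb 2 (μ (a, b) / (prob μ Prod.fst a * prob μ Prod.snd b)) := by
  set pT := prob μ Prod.snd b
  have hsupp (a : α) (h : prob μ Prod.fst a * pT = 0) : μ (a, b) = 0 := by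
    rcases mul_eq_zero.1 h with h | h
    · exact le_antisymm (h ▸ le_prob_fst hμ a b) (hμ _)
    · exact le_antisymm (h ▸ le_prob_snd hμ a b) (hμ _)
  have logSum := mul_log_div_le_sum_mul_log_div (condSupport μ b) (a := fun a => μ (a, b))
    (b := fun a => prob μ Prod.fst a * pT) (fun a _ => hμ (a, b))
    (fun a _ => mul_nonneg (pe_nonneg hμ _) (pe_nonneg hμ _)) fun a _ => hsupp a
  rw [sum_condSupport_eq hμ b fun _ h => h, ← prob_snd, ← sum_mul, ← pe_condSupport,
    sum_condSupport_eq hμ b fun _ h => by simp [h]] at logSum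
  have hratio : pT * log (pT / (pe μ (fun p => 0 < μ (p.1, b)) * pT))
      = pT * log (1 / pe μ (fun p => 0 < μ (p.1, b))) := by
    rcases eq_or_ne pT 0 with h | h
    · simp [h]
    · rw [div_mul_cancel_right₀ h, one_div]
  rw [hratio] at logSum
  simpa only [logb, mul_div_assoc', ← sum_div] using
    div_le_div_of_nonneg_right logSum (log_nonneg one_le_two)

theorem sum_prob_snd_mul_logb_le_mutInfo (hμ : ∀ p, 0 ≤ μ p) :
    ∑ b, prob μ Prod.snd b * logb 2 (1 / pe μ (fun p => 0 < μ (p.1, b))) ≤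
      mutInfo μ Prod.fst Prod.snd :=
  (mutInfo_fst_snd_eq_sum hμ).symm ▸ sum_le_sum fun b _ => prob_snd_mul_logb_le_sum hμ b

end MutualInformation

open Classical in
theorem mutInfo_ge_of_small_supports_general {S T : Type} [Fintype S] [Fintype T]
    (μ : S × T → ℝ) (hμ : IsPMF μ) (T₀ : Finset T) (δ ε : ℝ)
    (hδ0 : 0 < δ) (hδ1 : δ ≤ 1)
    (hsmall : ∀ t ∈ T₀, pe μ (fun p => 0 < μ (p.1, t)) ≤ δ)
    (hbig : ε ≤ pe μ (fun p => p.2 ∈ T₀)) :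
    mutInfo μ Prod.fst Prod.snd ≥ ε * Real.logb 2 (1 / δ) := by
  have hterm (t : T) : (if t ∈ T₀ then prob μ Prod.snd t * logb 2 (1 / δ) else 0) ≤
      prob μ Prod.snd t * logb 2 (1 / pe μ (fun p => 0 < μ (p.1, t))) := by
    split_ifs with ht
    · exact prob_snd_mul_logb_le_of_pe_condSupport_le hμ.1 (hsmall t ht)
    · exact prob_snd_mul_logb_pe_condSupport_nonneg hμ t
  calc ε * logb 2 (1 / δ) ≤ pe μ (fun p => p.2 ∈ T₀) * logb 2 (1 / δ) :=
        mul_le_mul_of_nonneg_right hbig (logb_nonneg one_lt_two (one_le_one_div hδ0 hδ1))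
    _ = ∑ t, if t ∈ T₀ then prob μ Prod.snd t * logb 2 (1 / δ) else 0 := by
        rw [pe_mem_eq_sum_prob, sum_mul, sum_ite_mem, univ_inter]
    _ ≤ ∑ t, prob μ Prod.snd t * logb 2 (1 / pe μ (fun p => 0 < μ (p.1, t))) :=
        sum_le_sum fun t _ => hterm t
    _ ≤ mutInfo μ Prod.fst Prod.snd := sum_prob_snd_mul_logb_le_mutInfo hμ.1

open Classical in
/-- if for each `t ∈ T₀` the support `𝒮_t` of `p_{S|T=t}` has
`Pr[S ∈ 𝒮_t] ≤ δ`, and `Pr[T ∈ T₀] ≥ ε`, then `I(S;T) ≥ ε·log(1/δ)`. -/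
theorem mutInfo_ge_of_small_supports {S T : Type} [Fintype S] [Fintype T]
    (μ : S × T → ℝ) (hμ : IsPMF μ) (T₀ : Finset T) (δ ε : ℝ)
    (hδ0 : 0 < δ) (hδ1 : δ ≤ 1) (hε0 : 0 ≤ ε) (hε1 : ε ≤ 1)
    (hsmall : ∀ t ∈ T₀, pe μ (fun p => 0 < μ (p.1, t)) ≤ δ)
    (hbig : ε ≤ pe μ (fun p => p.2 ∈ T₀)) :
    mutInfo μ Prod.fst Prod.snd ≥ ε * Real.logb 2 (1 / δ) :=
  mutInfo_ge_of_small_supports_general μ hμ T₀ δ ε hδ0 hδ1 hsmall hbig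

end Paper
end

section
/- For any 2-party protocol Π with input distribution (X,Y) and transcript M, the internal information cost from party 1 to party 2 is bounded by the expected number of bits sent from party 1 to party 2: I(X;M|Y) ≤ E[number of bits of M sent by party 1]. -/
namespace Paper

/-- A 2-party communication protocol. Parties send one bit at a time; whose turn
it is (or whether the protocol has halted, `none`) is determined by the
transcript so far together with that party's own input (`turn₁`/`turn₂`;
well-definedness is imposed as a consistency hypothesis on the support of the
input distribution). `next₁`/`next₂` give the bit sent as a function of the
transcript, the party's input and its private randomness; `out₁`/`out₂` give
the parties' outputs. -/
structure Protocol (𝒳 𝒴 ρ₁ ρ₂ 𝒵 : Type*) where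
  turn₁ : List Bool → 𝒳 → Option Bool
  turn₂ : List Bool → 𝒴 → Option Bool
  next₁ : List Bool → 𝒳 → ρ₁ → Bool
  next₂ : List Bool → 𝒴 → ρ₂ → Bool
  out₁ : List Bool → 𝒳 → ρ₁ → 𝒵
  out₂ : List Bool → 𝒴 → ρ₂ → 𝒵

/-- The transcript after `n` steps of the protocol (`some true` means party 1
speaks, `some false` party 2, `none` means the protocol has halted). -/
def Protocol.run {𝒳 𝒴 ρ₁ ρ₂ 𝒵 : Type*} (P : Protocol 𝒳 𝒴 ρ₁ ρ₂ 𝒵)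
    (x : 𝒳) (y : 𝒴) (r₁ : ρ₁) (r₂ : ρ₂) : ℕ → List Bool
  | 0 => []
  | n + 1 =>
    let m := P.run x y r₁ r₂ n
    match P.turn₁ m x with
    | none => m
    | some true => m ++ [P.next₁ m x r₁]
    | some false => m ++ [P.next₂ m y r₂]

/-- Number of bits sent by party 1 during the first `d` steps. -/
def Protocol.count₁ {𝒳 𝒴 ρ₁ ρ₂ 𝒵 : Type*} (P : Protocol 𝒳 𝒴 ρ₁ ρ₂ 𝒵)
    (x : 𝒳) (y : 𝒴) (r₁ : ρ₁) (r₂ : ρ₂) (d : ℕ) : ℕ :=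
  ((Finset.range d).filter (fun n => P.turn₁ (P.run x y r₁ r₂ n) x = some true)).card

/-- Number of bits sent by party 2 during the first `d` steps. -/
def Protocol.count₂ {𝒳 𝒴 ρ₁ ρ₂ 𝒵 : Type*} (P : Protocol 𝒳 𝒴 ρ₁ ρ₂ 𝒵)
    (x : 𝒳) (y : 𝒴) (r₁ : ρ₁) (r₂ : ρ₂) (d : ℕ) : ℕ :=
  ((Finset.range d).filter (fun n => P.turn₁ (P.run x y r₁ r₂ n) x = some false)).card

end Paper

/-!
Write `Zₙ = (Mₙ, Y)` for what party 2 has seen after `n` steps. The empty transcript carries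
no information, so `I(X;M|Y) = H(X|Z₀) - H(X|Z_d)` telescopes into the gains
`H(X|Zₙ) - H(X|Zₙ₊₁) = I(X;Bₙ|Zₙ)`, where `Bₙ` is the bit sent at step `n`. On the event that
party 1 sends it, the gain is at most `H(Bₙ|Zₙ) ≤ 1`. Otherwise the bit is computed by party 2,
and since transcripts are rectangles, given `Zₙ` it is a function of party 2's private
randomness alone, hence independent of `X`: the gain is `0`.
-/

namespace Paper

open Finset Real

section FiniteProbability

variable {Ω α β γ : Type*} [Fintype Ω] {μ : Ω → ℝ}

lemma pe_eq_sum_filter (E : Ω → Prop) [DecidablePred E] : pe μ E = ∑ ω with E ω, μ ω := by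
  rw [sum_filter, pe]
  congr!

lemma pe_congr_of_support {E F : Ω → Prop} (h : ∀ ω, μ ω ≠ 0 → (E ω ↔ F ω)) :
    pe μ E = pe μ F := by
  classical
  refine sum_congr rfl fun ω _ => ?_
  by_cases hω : μ ω = 0
  · simp [hω]
  · simp only [h ω hω]

lemma le_pe (hμ : ∀ ω, 0 ≤ μ ω) {E : Ω → Prop} {ω : Ω} (hE : E ω) : μ ω ≤ pe μ E := by
  classical
  rw [pe_eq_sum_filter]
  exact single_le_sum (fun ω _ => hμ ω) (mem_filter.2 ⟨mem_univ ω, hE⟩)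

lemma pe_mono (hμ : ∀ ω, 0 ≤ μ ω) {E F : Ω → Prop} (h : ∀ ω, E ω → F ω) :
    pe μ E ≤ pe μ F := by
  classical
  simp only [pe_eq_sum_filter]
  exact sum_le_sum_of_subset_of_nonneg (monotone_filter_right _ fun ω _ => h ω)
    fun ω _ _ => hμ ω

open Classical in
lemma sum_mul_eq_sum_prob (Z : Ω → γ) (φ : γ → ℝ) :
    ∑ ω, μ ω * φ (Z ω) = ∑ a ∈ univ.image Z, prob μ Z a * φ a := by
  simp only [prob, pe_eq_sum_filter, sum_mul]
  rw [← sum_fiberwise_of_maps_to (fun ω _ => mem_image_of_mem Z (mem_univ ω))]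
  exact sum_congr rfl fun a _ => sum_congr rfl fun ω hω => by rw [(mem_filter.1 hω).2]

lemma H_eq_neg_sum (Z : Ω → γ) : H μ Z = -∑ ω, μ ω * logb 2 (prob μ Z (Z ω)) := by
  classical
  rw [H, sum_mul_eq_sum_prob Z fun a => logb 2 (prob μ Z a)]

lemma H_congr {Z : Ω → β} {Z' : Ω → γ}
    (h : ∀ ω ω', μ ω ≠ 0 → μ ω' ≠ 0 → (Z ω' = Z ω ↔ Z' ω' = Z' ω)) : H μ Z = H μ Z' := by
  rw [H_eq_neg_sum, H_eq_neg_sum]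
  congr 1
  refine sum_congr rfl fun ω _ => ?_
  by_cases hω : μ ω = 0
  · simp [hω]
  · rw [prob, prob, pe_congr_of_support fun ω' hω' => h ω ω' hω hω']

lemma condEnt_congr (X : Ω → α) {Z : Ω → β} {Z' : Ω → γ}
    (h : ∀ ω ω', μ ω ≠ 0 → μ ω' ≠ 0 → (Z ω' = Z ω ↔ Z' ω' = Z' ω)) :
    condEnt μ X Z = condEnt μ X Z' := by
  rw [condEnt, condEnt, H_congr h, H_congr fun ω ω' hω hω' => ?_]
  simp only [Prod.mk.injEq, h ω ω' hω hω']

lemma condMutInfo_eq_condEnt_sub_condEnt (X : Ω → α) (M : Ω → β) (Y : Ω → γ) :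
    condMutInfo μ X M Y = condEnt μ X Y - condEnt μ X (fun ω => (M ω, Y ω)) := by
  rw [condMutInfo, condEnt, condEnt]
  ring

lemma sum_pe_eq_sum_mul_card (E : ℕ → Ω → Prop) [∀ n ω, Decidable (E n ω)] (d : ℕ) :
    ∑ n ∈ range d, pe μ (E n) = ∑ ω, μ ω * #{n ∈ range d | E n ω} := by
  simp only [pe_eq_sum_filter, sum_filter, card_filter, Nat.cast_sum, mul_sum]
  rw [sum_comm]
  refine sum_congr rfl fun ω _ => sum_congr rfl fun n _ => ?_
  split_ifs <;> simp

end FiniteProbability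

section InformationBounds

variable {Ω α β γ : Type*} [Fintype Ω] {μ : Ω → ℝ}

lemma mul_log_sub_log_le {p t : ℝ} (hp : 0 ≤ p) (ht : 0 < t) : p * (log t - log p) ≤ t - p := by
  rcases hp.eq_or_lt with rfl | hp
  · simpa using ht.le
  calc p * (log t - log p) = p * log (t / p) := by rw [log_div ht.ne' hp.ne']
    _ ≤ p * (t / p - 1) := mul_le_mul_of_nonneg_left (log_le_sub_one_of_pos (by positivity)) hp.le
    _ = t - p := by field_simp

lemma mul_logb_add_mul_logb_le {p q : ℝ} (hp : 0 ≤ p) (hq : 0 ≤ q) :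
    p * (logb 2 (p + q) - logb 2 p) + q * (logb 2 (p + q) - logb 2 q) ≤ p + q := by
  rcases (add_nonneg hp hq).eq_or_lt with hs | hs
  · obtain ⟨rfl, rfl⟩ : p = 0 ∧ q = 0 := ⟨by linarith, by linarith⟩
    simp
  -- Comparing each term with half the total mass turns the bound into `log ≤ id - 1`.
  have hp' := mul_log_sub_log_le hp (half_pos hs)
  have hq' := mul_log_sub_log_le hq (half_pos hs)
  rw [log_div hs.ne' two_ne_zero] at hp' hq'
  simp only [logb, ← sub_div, ← mul_div_assoc, ← add_div]
  rw [div_le_iff₀ (log_pos one_lt_two)]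
  nlinarith [log_pos one_lt_two]

/-- `log P(x,b|z) - log P(b|z) - log P(x|z)` at the sample point `ω`; its `μ`-mean is `I(X;B|Z)`. -/
noncomputable def pointwiseCondMutInfo (μ : Ω → ℝ) (X : Ω → α) (Z : Ω → γ) (B : Ω → β)
    (ω : Ω) : ℝ :=
  logb 2 (prob μ (fun ω => (X ω, Z ω, B ω)) (X ω, Z ω, B ω))
    - logb 2 (prob μ (fun ω => (Z ω, B ω)) (Z ω, B ω))
    - logb 2 (prob μ (fun ω => (X ω, Z ω)) (X ω, Z ω)) + logb 2 (prob μ Z (Z ω))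

lemma condEnt_sub_condEnt_eq_sum (X : Ω → α) (Z : Ω → γ) (B : Ω → β) :
    condEnt μ X Z - condEnt μ X (fun ω => (Z ω, B ω))
      = ∑ ω, μ ω * pointwiseCondMutInfo μ X Z B ω := by
  simp only [condEnt, H_eq_neg_sum, pointwiseCondMutInfo, mul_add, mul_sub, sum_add_distrib,
    sum_sub_distrib]
  ring

lemma sum_filter_mul_eq_sum_prob [Fintype β] (Z : Ω → γ) (B : Ω → β) (z : γ) (φ : β → ℝ)
    [DecidablePred fun ω => Z ω = z] :
    ∑ ω with Z ω = z, μ ω * φ (B ω) = ∑ b, prob μ (fun ω => (Z ω, B ω)) (z, b) * φ b := by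
  classical
  rw [← sum_fiberwise _ B]
  refine sum_congr rfl fun b _ => ?_
  rw [prob, pe_eq_sum_filter, sum_mul, filter_filter]
  refine sum_congr (by ext; simp) fun ω hω => ?_
  rw [(Prod.mk.inj (mem_filter.1 hω).2).2]

lemma prob_eq_sum_prob_prod [Fintype β] (Z : Ω → γ) (B : Ω → β) (z : γ) :
    prob μ Z z = ∑ b, prob μ (fun ω => (Z ω, B ω)) (z, b) := by
  classical
  rw [prob, pe_eq_sum_filter]
  simpa using sum_filter_mul_eq_sum_prob (μ := μ) Z B z fun _ => 1

lemma sum_fiber_mul_pointwiseCondMutInfo_le (hμ : ∀ ω, 0 ≤ μ ω) (X : Ω → α) (Z : Ω → γ)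
    (B : Ω → Bool) (z : γ) [DecidablePred fun ω => Z ω = z] :
    ∑ ω with Z ω = z, μ ω * pointwiseCondMutInfo μ X Z B ω ≤ prob μ Z z := by
  classical
  set q : Bool → ℝ := fun b => prob μ (fun ω => (Z ω, B ω)) (z, b)
  have hq : ∀ b, 0 ≤ q b := fun b => sum_nonneg fun ω _ => by split_ifs <;> simp [hμ ω]
  -- Dropping `log P(x,b|z) - log P(x|z) ≤ 0` bounds `I(X;B|Z=z)` by `H(B|Z=z)`.
  have hpoint : ∀ ω ∈ ({ω | Z ω = z} : Finset Ω), μ ω * pointwiseCondMutInfo μ X Z B ω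
      ≤ μ ω * (logb 2 (prob μ Z z) - logb 2 (q (B ω))) := by
    intro ω hω
    obtain rfl := (mem_filter.1 hω).2
    rcases (hμ ω).eq_or_lt with h0 | hpos
    · simp [← h0]
    refine mul_le_mul_of_nonneg_left ?_ hpos.le
    have hle : logb 2 (prob μ (fun ω => (X ω, Z ω, B ω)) (X ω, Z ω, B ω))
        ≤ logb 2 (prob μ (fun ω => (X ω, Z ω)) (X ω, Z ω)) :=
      logb_le_logb_of_le one_lt_two (hpos.trans_le (le_pe hμ rfl))
        (pe_mono hμ fun ω' h => by simp_all)
    simp only [pointwiseCondMutInfo, q]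
    linarith
  have hsum : prob μ Z z = q true + q false := by
    rw [prob_eq_sum_prob_prod Z B z, Fintype.sum_bool]
  calc _ ≤ ∑ ω with Z ω = z, μ ω * (logb 2 (prob μ Z z) - logb 2 (q (B ω))) := sum_le_sum hpoint
    _ = ∑ b, q b * (logb 2 (prob μ Z z) - logb 2 (q b)) := by
      convert sum_filter_mul_eq_sum_prob Z B z fun b => logb 2 (prob μ Z z) - logb 2 (q b)
    _ ≤ prob μ Z z := by
      rw [Fintype.sum_bool, hsum]
      exact mul_logb_add_mul_logb_le (hq true) (hq false)

lemma pointwiseCondMutInfo_eq_zero [Fintype α] [Fintype β] (hμ : ∀ ω, 0 ≤ μ ω)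
    {X : Ω → α} {Z : Ω → γ} {B : Ω → β} {z : γ} {a : α → ℝ} {c : β → ℝ}
    (hfac : ∀ x b, prob μ (fun ω => (X ω, Z ω, B ω)) (x, z, b) = a x * c b)
    {ω : Ω} (hz : Z ω = z) (hω : μ ω ≠ 0) : pointwiseCondMutInfo μ X Z B ω = 0 := by
  have hX : ∀ x, prob μ (fun ω => (X ω, Z ω)) (x, z) = a x * ∑ b, c b := fun x => by
    rw [prob_eq_sum_prob_prod _ B, mul_sum]
    refine sum_congr rfl fun b _ => ?_
    rw [← hfac]
    exact pe_congr_of_support fun _ _ => by simp [and_assoc]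
  have hB : ∀ b, prob μ (fun ω => (Z ω, B ω)) (z, b) = (∑ x, a x) * c b := fun b => by
    rw [prob_eq_sum_prob_prod _ X, sum_mul]
    refine sum_congr rfl fun x _ => ?_
    rw [← hfac]
    exact pe_congr_of_support fun _ _ => by simp [and_comm]
  have hZ : prob μ Z z = (∑ x, a x) * ∑ b, c b := by
    rw [prob_eq_sum_prob_prod _ X, sum_mul]
    refine sum_congr rfl fun x _ => ?_
    rw [← hX]
    exact pe_congr_of_support fun _ _ => by simp [and_comm]
  have hpos : 0 < a (X ω) * c (B ω) := by
    rw [← hfac, ← hz]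
    exact ((hμ ω).lt_of_ne' hω).trans_le (le_pe hμ rfl)
  have hZpos : 0 < (∑ x, a x) * ∑ b, c b := by
    rw [← hZ, ← hz]
    exact ((hμ ω).lt_of_ne' hω).trans_le (le_pe hμ rfl)
  obtain ⟨ha, hc⟩ := mul_ne_zero_iff.1 hpos.ne'
  obtain ⟨hA, hC⟩ := mul_ne_zero_iff.1 hZpos.ne'
  rw [pointwiseCondMutInfo, hz, hfac, hX, hB, hZ, logb_mul ha hc, logb_mul hA hc,
    logb_mul ha hC, logb_mul hA hC]
  ring

/-- `I(X;B|Z) ≤ P(Z ∈ S)` for a bit `B` that is conditionally independent of `X` outside `S`. -/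
lemma condEnt_sub_condEnt_le [Fintype α] (hμ : ∀ ω, 0 ≤ μ ω) (X : Ω → α) (Z : Ω → γ)
    (B : Ω → Bool) (S : γ → Prop)
    (hS : ∀ z, ¬ S z → ∃ (a : α → ℝ) (c : Bool → ℝ),
      ∀ x b, prob μ (fun ω => (X ω, Z ω, B ω)) (x, z, b) = a x * c b) :
    condEnt μ X Z - condEnt μ X (fun ω => (Z ω, B ω)) ≤ pe μ (fun ω => S (Z ω)) := by
  classical
  have hmaps : ∀ ω ∈ univ, Z ω ∈ univ.image Z := fun ω _ => mem_image_of_mem Z (mem_univ ω)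
  rw [condEnt_sub_condEnt_eq_sum, pe_eq_sum_filter, sum_filter,
    ← sum_fiberwise_of_maps_to hmaps, ← sum_fiberwise_of_maps_to hmaps]
  refine sum_le_sum fun z _ => ?_
  by_cases hz : S z
  · refine (sum_fiber_mul_pointwiseCondMutInfo_le hμ X Z B z).trans_eq ?_
    rw [prob, pe_eq_sum_filter]
    exact sum_congr rfl fun ω hω => by rw [if_pos ((mem_filter.1 hω).2 ▸ hz)]
  · obtain ⟨a, c, hfac⟩ := hS z hz
    refine le_of_eq ((sum_eq_zero fun ω hω => ?_).trans (sum_eq_zero fun ω hω => ?_).symm)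
    · by_cases hω' : μ ω = 0
      · rw [hω', zero_mul]
      · rw [pointwiseCondMutInfo_eq_zero hμ hfac (mem_filter.1 hω).2 hω', mul_zero]
    · rw [if_neg ((mem_filter.1 hω).2 ▸ hz)]

end InformationBounds

section Transcripts

variable {𝒳 𝒴 ρ₁ ρ₂ 𝒵 : Type*}

def Protocol.Consistent (P : Protocol 𝒳 𝒴 ρ₁ ρ₂ 𝒵) (x : 𝒳) (y : 𝒴) : Prop :=
  ∀ m, P.turn₁ m x = P.turn₂ m y

def Protocol.transcript (P : Protocol 𝒳 𝒴 ρ₁ ρ₂ 𝒵) (n : ℕ) (ω : (𝒳 × 𝒴) × ρ₁ × ρ₂) :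
    List Bool :=
  P.run ω.1.1 ω.1.2 ω.2.1 ω.2.2 n

namespace Protocol

variable {P : Protocol 𝒳 𝒴 ρ₁ ρ₂ 𝒵} {x x' : 𝒳} {y : 𝒴} {r₁ r₁' : ρ₁} {r₂ r₂' : ρ₂} {n : ℕ}
  {m : List Bool}

lemma run_succ_of_turn_eq_none (h : P.turn₁ (P.run x y r₁ r₂ n) x = none) :
    P.run x y r₁ r₂ (n + 1) = P.run x y r₁ r₂ n := by
  simp [run, h]

lemma run_succ_of_turn_eq_some_true (h : P.turn₁ (P.run x y r₁ r₂ n) x = some true) :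
    P.run x y r₁ r₂ (n + 1) = P.run x y r₁ r₂ n ++ [P.next₁ (P.run x y r₁ r₂ n) x r₁] := by
  simp [run, h]

lemma run_succ_of_turn_eq_some_false (h : P.turn₁ (P.run x y r₁ r₂ n) x = some false) :
    P.run x y r₁ r₂ (n + 1) = P.run x y r₁ r₂ n ++ [P.next₂ (P.run x y r₁ r₂ n) y r₂] := by
  simp [run, h]

lemma length_run_le (n : ℕ) : (P.run x y r₁ r₂ n).length ≤ n := by
  induction n with
  | zero => simp [run]
  | succ n ih =>
    rcases h : P.turn₁ (P.run x y r₁ r₂ n) x with _ | _ | _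
    · rw [run_succ_of_turn_eq_none h]; omega
    · simpa [run_succ_of_turn_eq_some_false h]
    · simpa [run_succ_of_turn_eq_some_true h]

lemma length_run_of_turn_ne_none (h : P.turn₁ (P.run x y r₁ r₂ n) x ≠ none) :
    (P.run x y r₁ r₂ n).length = n := by
  induction n with
  | zero => simp [run]
  | succ n ih =>
    rcases h' : P.turn₁ (P.run x y r₁ r₂ n) x with _ | _ | _
    · rw [run_succ_of_turn_eq_none h'] at h
      exact absurd h' h
    · simp [run_succ_of_turn_eq_some_false h', ih (by simp [h'])]
    · simp [run_succ_of_turn_eq_some_true h', ih (by simp [h'])]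

lemma run_succ_eq_append_getD (h : P.turn₁ (P.run x y r₁ r₂ n) x ≠ none) :
    P.run x y r₁ r₂ (n + 1) = P.run x y r₁ r₂ n ++ [(P.run x y r₁ r₂ (n + 1)).getD n false] := by
  have hlen := length_run_of_turn_ne_none h
  rcases h' : P.turn₁ (P.run x y r₁ r₂ n) x with _ | _ | _
  · exact absurd h' h
  all_goals
    simp only [run_succ_of_turn_eq_some_false, run_succ_of_turn_eq_some_true, h',
      List.getD_append_right _ _ _ _ hlen.le, hlen, Nat.sub_self]
    rfl

lemma take_run_succ (n : ℕ) : (P.run x y r₁ r₂ (n + 1)).take n = P.run x y r₁ r₂ n := by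
  by_cases h : P.turn₁ (P.run x y r₁ r₂ n) x = none
  · rw [run_succ_of_turn_eq_none h, List.take_of_length_le (length_run_le n)]
  · rw [run_succ_eq_append_getD h, List.take_left' (length_run_of_turn_ne_none h)]

-- Transcripts are rectangles: party 1's bits see only `(x, r₁)`, party 2's only `(y, r₂)`.
lemma run_rectangle (hxy : P.Consistent x y) (hx'y : P.Consistent x' y)
    (h₁ : P.run x y r₁ r₂' n = m) (h₂ : P.run x' y r₁' r₂ n = m) : P.run x y r₁ r₂ n = m := by
  induction n generalizing m with
  | zero => simpa [run] using h₁
  | succ n ih =>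
    subst h₁
    have h₀ : P.run x' y r₁' r₂ n = P.run x y r₁ r₂' n := by
      rw [← take_run_succ, h₂, take_run_succ]
    have hrun : P.run x y r₁ r₂ n = P.run x y r₁ r₂' n := ih rfl h₀
    simp only [run, hxy _, hx'y _, hrun, h₀] at h₂ ⊢
    split at h₂ <;> simp_all

lemma run_succ_eq_run_succ_iff (hxy : P.Consistent x y) (hx'y : P.Consistent x' y) :
    P.run x y r₁ r₂ (n + 1) = P.run x' y r₁' r₂' (n + 1) ↔
      P.run x y r₁ r₂ n = P.run x' y r₁' r₂' n ∧
        (P.run x y r₁ r₂ (n + 1)).getD n false = (P.run x' y r₁' r₂' (n + 1)).getD n false := by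
  refine ⟨fun h => ⟨by rw [← take_run_succ, h, take_run_succ], by rw [h]⟩, fun ⟨h, hb⟩ => ?_⟩
  by_cases ht : P.turn₂ (P.run x y r₁ r₂ n) y = none
  · have ht' : P.turn₂ (P.run x' y r₁' r₂' n) y = none := h ▸ ht
    rw [run_succ_of_turn_eq_none (by rwa [hxy]), run_succ_of_turn_eq_none (by rwa [hx'y]), h]
  · have ht' : P.turn₂ (P.run x' y r₁' r₂' n) y ≠ none := h ▸ ht
    calc P.run x y r₁ r₂ (n + 1)
        = P.run x y r₁ r₂ n ++ [(P.run x y r₁ r₂ (n + 1)).getD n false] :=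
          run_succ_eq_append_getD (by rwa [hxy])
      _ = P.run x' y r₁' r₂' n ++ [(P.run x' y r₁' r₂' (n + 1)).getD n false] := by rw [hb, h]
      _ = P.run x' y r₁' r₂' (n + 1) := (run_succ_eq_append_getD (by rwa [hx'y])).symm

lemma getD_run_succ_of_turn_ne_some_true (hxy : P.Consistent x y)
    (h : P.turn₂ (P.run x y r₁ r₂ n) y ≠ some true) :
    (P.run x y r₁ r₂ (n + 1)).getD n false =
      if P.turn₂ (P.run x y r₁ r₂ n) y = some false then P.next₂ (P.run x y r₁ r₂ n) y r₂
      else false := by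
  rw [← hxy] at h ⊢
  rcases h' : P.turn₁ (P.run x y r₁ r₂ n) x with _ | _ | _
  · rw [run_succ_of_turn_eq_none h', List.getD_eq_default _ _ (length_run_le n)]
    simp
  · have hlen : (P.run x y r₁ r₂ n).length = n := length_run_of_turn_ne_none (by simp [h'])
    rw [run_succ_of_turn_eq_some_false h', List.getD_append_right _ _ _ _ hlen.le, hlen,
      Nat.sub_self]
    simp
  · exact absurd h' h

end Protocol

end Transcripts

section TranscriptDistribution

lemma pe_prod_eq_mul {Ω₀ Ω₁ Ω₂ : Type*} [Fintype Ω₀] [Fintype Ω₁] [Fintype Ω₂]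
    (ν : Ω₀ → ℝ) (π₁ : Ω₁ → ℝ) (π₂ : Ω₂ → ℝ) (v : Ω₀) (E₁ : Ω₁ → Prop) (E₂ : Ω₂ → Prop) :
    pe (fun ω : Ω₀ × Ω₁ × Ω₂ => ν ω.1 * π₁ ω.2.1 * π₂ ω.2.2)
        (fun ω => ω.1 = v ∧ E₁ ω.2.1 ∧ E₂ ω.2.2) = ν v * pe π₁ E₁ * pe π₂ E₂ := by
  classical
  simp only [pe, Fintype.sum_prod_type, ite_and, sum_ite_irrel, sum_const_zero, sum_ite_eq',
    mem_univ, if_true]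
  rw [mul_assoc, sum_mul_sum, mul_sum]
  refine sum_congr rfl fun r₁ _ => ?_
  split_ifs <;> simp [mul_sum, mul_assoc]

variable {𝒳 𝒴 ρ₁ ρ₂ 𝒵 : Type*} [Fintype 𝒳] [Fintype 𝒴] [Fintype ρ₁] [Fintype ρ₂]
  {P : Protocol 𝒳 𝒴 ρ₁ ρ₂ 𝒵} {μ : (𝒳 × 𝒴) × ρ₁ × ρ₂ → ℝ}

-- Given the transcript so far and `y`, a bit sent by party 2 depends only on `r₂`, which is
-- independent of `x` because transcripts are rectangles.
lemma exists_prob_transcript_getD_eq_mul {νin : 𝒳 × 𝒴 → ℝ} {π₁ : ρ₁ → ℝ} {π₂ : ρ₂ → ℝ}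
    (hμ : μ = fun ω => νin ω.1 * π₁ ω.2.1 * π₂ ω.2.2)
    (hcons : ∀ ω, μ ω ≠ 0 → P.Consistent ω.1.1 ω.1.2) (n : ℕ) {m : List Bool} {y : 𝒴}
    (ht : P.turn₂ m y ≠ some true) :
    ∃ (a : 𝒳 → ℝ) (c : Bool → ℝ), ∀ x b,
      prob μ (fun ω => (ω.1.1, (P.transcript n ω, ω.1.2), (P.transcript (n + 1) ω).getD n false))
        (x, (m, y), b) = a x * c b := by
  subst hμ
  let bit₂ (r₂ : ρ₂) : Bool := if P.turn₂ m y = some false then P.next₂ m y r₂ else false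
  refine ⟨fun x => νin (x, y) * pe π₁ fun r₁ => ∃ r₂, P.run x y r₁ r₂ n = m,
    fun b => pe π₂ fun r₂ => (∃ x r₁, P.Consistent x y ∧ P.run x y r₁ r₂ n = m) ∧ bit₂ r₂ = b,
    fun x b => ?_⟩
  beta_reduce
  rw [← pe_prod_eq_mul, prob]
  refine pe_congr_of_support ?_
  rintro ⟨⟨x', y'⟩, r₁, r₂⟩ hω
  have hc := hcons _ hω
  simp only [Protocol.transcript, Prod.mk.injEq] at hc ⊢
  constructor
  · rintro ⟨rfl, ⟨hm, rfl⟩, rfl⟩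
    refine ⟨⟨rfl, rfl⟩, ⟨r₂, hm⟩, ⟨x', r₁, hc, hm⟩, ?_⟩
    rw [Protocol.getD_run_succ_of_turn_ne_some_true hc (hm ▸ ht), hm]
  · rintro ⟨⟨rfl, rfl⟩, ⟨r₂', h₁⟩, ⟨x'', r₁', hc', h₂⟩, rfl⟩
    have hm := Protocol.run_rectangle hc hc' h₁ h₂
    refine ⟨rfl, ⟨hm, rfl⟩, ?_⟩
    rw [Protocol.getD_run_succ_of_turn_ne_some_true hc (hm ▸ ht), hm]

-- `(Mₙ₊₁).getD n false` is the bit sent at step `n`, or `false` once the protocol has halted.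
lemma condEnt_transcript_succ (X : (𝒳 × 𝒴) × ρ₁ × ρ₂ → 𝒳)
    (hcons : ∀ ω, μ ω ≠ 0 → P.Consistent ω.1.1 ω.1.2) (n : ℕ) :
    condEnt μ X (fun ω => (P.transcript (n + 1) ω, ω.1.2))
      = condEnt μ X
        (fun ω => ((P.transcript n ω, ω.1.2), (P.transcript (n + 1) ω).getD n false)) := by
  refine condEnt_congr X ?_
  rintro ⟨⟨x, y⟩, r₁, r₂⟩ ⟨⟨x', y'⟩, r₁', r₂'⟩ hω hω'
  simp only [Protocol.transcript, Prod.mk.injEq]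
  by_cases hy : y' = y
  · subst hy
    rw [Protocol.run_succ_eq_run_succ_iff (hcons ((x', y'), r₁', r₂') hω')
      (hcons ((x, y'), r₁, r₂) hω)]
    tauto
  · simp [hy]

lemma condEnt_transcript_sub_condEnt_transcript_succ_le {νin : 𝒳 × 𝒴 → ℝ} {π₁ : ρ₁ → ℝ}
    {π₂ : ρ₂ → ℝ} (hμ : μ = fun ω => νin ω.1 * π₁ ω.2.1 * π₂ ω.2.2) (hμ₀ : ∀ ω, 0 ≤ μ ω)
    (hcons : ∀ ω, μ ω ≠ 0 → P.Consistent ω.1.1 ω.1.2) (n : ℕ) :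
    condEnt μ (fun ω => ω.1.1) (fun ω => (P.transcript n ω, ω.1.2))
      - condEnt μ (fun ω => ω.1.1) (fun ω => (P.transcript (n + 1) ω, ω.1.2))
      ≤ pe μ (fun ω => P.turn₁ (P.transcript n ω) ω.1.1 = some true) := by
  rw [condEnt_transcript_succ _ hcons n]
  refine (condEnt_sub_condEnt_le hμ₀ _ _ _ (fun z => P.turn₂ z.1 z.2 = some true)
    fun z hz => exists_prob_transcript_getD_eq_mul hμ hcons n hz).trans_eq ?_
  exact pe_congr_of_support fun ω hω => by rw [hcons ω hω]

end TranscriptDistribution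

/-- for any 2-party protocol with inputs `(X,Y)` (with private
randomness independent of the inputs and of each other) and transcript `M`
(run for at most `d` steps), `I(X;M|Y) ≤ E[#bits sent by party 1]`. -/
theorem infoCost₁_le_expected_bits₁ {𝒳 𝒴 ρ₁ ρ₂ : Type}
    [Fintype 𝒳] [Fintype 𝒴] [Fintype ρ₁] [Fintype ρ₂]
    (νin : 𝒳 × 𝒴 → ℝ) (π₁ : ρ₁ → ℝ) (π₂ : ρ₂ → ℝ)
    (hν : IsPMF νin) (hπ₁ : IsPMF π₁) (hπ₂ : IsPMF π₂)
    (P : Protocol 𝒳 𝒴 ρ₁ ρ₂ Unit) (d : ℕ)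
    (μ : (𝒳 × 𝒴) × ρ₁ × ρ₂ → ℝ)
    (hμ : μ = fun ω => νin ω.1 * π₁ ω.2.1 * π₂ ω.2.2)
    (X : (𝒳 × 𝒴) × ρ₁ × ρ₂ → 𝒳) (hX : X = fun ω => ω.1.1)
    (Y : (𝒳 × 𝒴) × ρ₁ × ρ₂ → 𝒴) (hY : Y = fun ω => ω.1.2)
    (M : (𝒳 × 𝒴) × ρ₁ × ρ₂ → List Bool)
    (hM : M = fun ω => P.run ω.1.1 ω.1.2 ω.2.1 ω.2.2 d)
    (hcons : ∀ ω, μ ω ≠ 0 → ∀ m : List Bool, P.turn₁ m (X ω) = P.turn₂ m (Y ω)) :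
    condMutInfo μ X M Y
      ≤ ∑ ω, μ ω * (P.count₁ ω.1.1 ω.1.2 ω.2.1 ω.2.2 d : ℝ) := by
  subst hX hY hM
  have hμ₀ : ∀ ω, 0 ≤ μ ω := fun ω => by
    rw [hμ]
    exact mul_nonneg (mul_nonneg (hν.1 _) (hπ₁.1 _)) (hπ₂.1 _)
  set F : ℕ → ℝ := fun n => condEnt μ (fun ω => ω.1.1) (fun ω => (P.transcript n ω, ω.1.2))
  calc _ = F 0 - F d := by
        rw [condMutInfo_eq_condEnt_sub_condEnt]
        congr 1
        exact condEnt_congr _ fun _ _ _ _ => by simp [Protocol.transcript, Protocol.run]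
    _ = ∑ n ∈ range d, (F n - F (n + 1)) := (sum_range_sub' F d).symm
    _ ≤ ∑ n ∈ range d, pe μ (fun ω => P.turn₁ (P.transcript n ω) ω.1.1 = some true) :=
        sum_le_sum fun n _ => condEnt_transcript_sub_condEnt_transcript_succ_le hμ hμ₀ hcons n
    _ = _ := sum_pe_eq_sum_mul_card _ d

end Paper
end

section
/- Let Π be a protocol with inputs (X,Y), transcript M, and outputs (A,B), where party 1 outputs A and party 2 outputs B, and B - (Y,M) - X is a Markov chain. Then I(X;M|Y) ≥ H(B|Y) - H(A,B|X,Y) + I(X,A ; M | Y,B). -/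
/-!
Expanding every quantity into joint entropies and eliminating `H(X,Y,M)` with the Markov
condition, the claimed inequality becomes `H(X,B,Y,M) ≤ H(X,A,M,Y,B)`, an instance of the
monotonicity of entropy under coarsening. Entropy only sees the partition of `Ω` induced by a
random variable, which gives that monotonicity as well as invariance under reordering tuples.
-/

namespace Paper

open Classical

variable {Ω α β : Type*} [Fintype Ω] (μ : Ω → ℝ)

lemma H_eq_neg_sum_mul_logb_prob (X : Ω → α) :
    H μ X = -∑ ω, μ ω * Real.logb 2 (prob μ X (X ω)) := by
  have fiberwise : ∀ a, prob μ X a * Real.logb 2 (prob μ X a)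
      = ∑ ω, if X ω = a then μ ω * Real.logb 2 (prob μ X (X ω)) else 0 := by
    intro a
    unfold prob pe
    rw [Finset.sum_mul]
    refine Finset.sum_congr rfl fun ω _ => ?_
    by_cases h : X ω = a <;> simp [h]
  rw [H, Finset.sum_congr rfl fun a _ => fiberwise a, Finset.sum_comm]
  congr 1
  refine Finset.sum_congr rfl fun ω _ => ?_
  rw [Finset.sum_ite_eq (Finset.univ.image X) (X ω)]
  simp

variable {μ}

lemma le_prob_self (hμ : ∀ ω, 0 ≤ μ ω) (X : Ω → α) (ω : Ω) : μ ω ≤ prob μ X (X ω) := by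
  simpa [prob, pe] using Finset.single_le_sum (f := fun ω' => if X ω' = X ω then μ ω' else 0)
    (fun i _ => by split <;> simp [hμ i]) (Finset.mem_univ ω)

lemma prob_le_prob_of_determines (hμ : ∀ ω, 0 ≤ μ ω) {X : Ω → α} {Y : Ω → β}
    (h : ∀ ω₁ ω₂, X ω₁ = X ω₂ → Y ω₁ = Y ω₂) (ω : Ω) :
    prob μ X (X ω) ≤ prob μ Y (Y ω) := by
  refine Finset.sum_le_sum fun i _ => ?_
  by_cases hi : X i = X ω
  · simp [hi, h _ _ hi]
  · rw [if_neg hi]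
    split <;> simp [hμ i]

lemma H_le_H_of_determines (hμ : ∀ ω, 0 ≤ μ ω) {X : Ω → α} {Y : Ω → β}
    (h : ∀ ω₁ ω₂, X ω₁ = X ω₂ → Y ω₁ = Y ω₂) : H μ Y ≤ H μ X := by
  rw [H_eq_neg_sum_mul_logb_prob, H_eq_neg_sum_mul_logb_prob, neg_le_neg_iff]
  refine Finset.sum_le_sum fun ω _ => ?_
  rcases (hμ ω).eq_or_lt with hzero | hpos
  · simp [← hzero]
  · have hX : 0 < prob μ X (X ω) := hpos.trans_le (le_prob_self hμ X ω)
    exact mul_le_mul_of_nonneg_left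
      (Real.logb_le_logb_of_le one_lt_two hX (prob_le_prob_of_determines hμ h ω)) (hμ ω)

lemma H_congr_of_eq_iff (hμ : ∀ ω, 0 ≤ μ ω) {X : Ω → α} {Y : Ω → β}
    (h : ∀ ω₁ ω₂, X ω₁ = X ω₂ ↔ Y ω₁ = Y ω₂) : H μ X = H μ Y :=
  le_antisymm (H_le_H_of_determines hμ fun ω₁ ω₂ => (h ω₁ ω₂).2)
    (H_le_H_of_determines hμ fun ω₁ ω₂ => (h ω₁ ω₂).1)

/-- if `B - (Y,M) - X` is a Markov chain (i.e. `I(X;B|Y,M)=0`),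
then `I(X;M|Y) ≥ H(B|Y) - H(A,B|X,Y) + I(X,A;M|Y,B)`. -/
theorem infoCost₁_lower_bound {Ω 𝒳 𝒴 𝒜 ℬ ℳ : Type} [Fintype Ω]
    (μ : Ω → ℝ) (hμ : IsPMF μ)
    (X : Ω → 𝒳) (Y : Ω → 𝒴) (A : Ω → 𝒜) (B : Ω → ℬ) (M : Ω → ℳ)
    (hMarkov : condMutInfo μ X B (fun ω => (Y ω, M ω)) = 0) :
    condMutInfo μ X M Y
      ≥ condEnt μ B Y - condEnt μ (fun ω => (A ω, B ω)) (fun ω => (X ω, Y ω))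
        + condMutInfo μ (fun ω => (X ω, A ω)) M (fun ω => (Y ω, B ω)) := by
  have reorder {α β : Type} {U : Ω → α} {V : Ω → β}
      (h : ∀ ω₁ ω₂, U ω₁ = U ω₂ ↔ V ω₁ = V ω₂) : H μ U = H μ V :=
    H_congr_of_eq_iff hμ.1 h
  have hXABY : H μ (fun ω => ((A ω, B ω), (X ω, Y ω)))
      = H μ (fun ω => ((X ω, A ω), (Y ω, B ω))) := reorder (by simp only [Prod.ext_iff]; tauto)
  have hBYM : H μ (fun ω => (B ω, (Y ω, M ω))) = H μ (fun ω => (M ω, (Y ω, B ω))) :=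
    reorder (by simp only [Prod.ext_iff]; tauto)
  have hXYM : H μ (fun ω => (X ω, (Y ω, M ω))) = H μ (fun ω => (X ω, (M ω, Y ω))) :=
    reorder (by simp only [Prod.ext_iff]; tauto)
  have hBY : H μ (fun ω => (B ω, Y ω)) = H μ (fun ω => (Y ω, B ω)) :=
    reorder (by simp only [Prod.ext_iff]; tauto)
  have hYM : H μ (fun ω => (Y ω, M ω)) = H μ (fun ω => (M ω, Y ω)) :=
    reorder (by simp only [Prod.ext_iff]; tauto)
  have coarsen : H μ (fun ω => (X ω, (B ω, (Y ω, M ω))))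
      ≤ H μ (fun ω => ((X ω, A ω), (M ω, (Y ω, B ω)))) :=
    H_le_H_of_determines hμ.1 (by simp only [Prod.ext_iff]; tauto)
  simp only [condMutInfo, condEnt] at hMarkov ⊢
  linarith

end Paper
end
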